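/- arXiv:1410.5479 — 2 statements merged into one kernel-verified Lean document; each statement's English description precedes it below -/
import Mathlib

section
/- For integers k ≥ 0 and l ≤ −2 the double sum ∑_{a=0}^{k−2} ∑_{b=0}^{−l} (−1)^{a+b} C(2k,a)·C(−l,b)·C(k−a−2l−b−1, −b−2l+1) equals (−1)^{l+k}·C(2k+2l−2, k+l) − δ_{k+l,0}. -/
/-- Generalized binomial coefficient: `0` for `k < 0`; usual binomial for `n ≥ 0`
(zero when `k > n`); for `n < 0`: `(-1)^k * C (k - n - 1) k` when `k ≥ 0`,
`(-1)^(n-k) * C (-k - 1) (n - k)` when `k ≤ n`, and `0` otherwise. -/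
def C (n k : ℤ) : ℤ :=
  if 0 ≤ n then (if 0 ≤ k then (n.toNat.choose k.toNat : ℤ) else 0)
  else if 0 ≤ k then (-1) ^ k.toNat * ((k - n - 1).toNat.choose k.toNat : ℤ)
  else if k ≤ n then (-1) ^ (n - k).toNat * ((-k - 1).toNat.choose (n - k).toNat : ℤ)
  else 0

/-- E n k = generalized binomial C(n, k) for natural k. -/
def E (n : ℤ) (k : ℕ) : ℤ :=
  if 0 ≤ n then (n.toNat.choose k : ℤ)
  else (-1) ^ k * (((k : ℤ) - n - 1).toNat.choose k : ℤ)

lemma E_zero (n : ℤ) : E n 0 = 1 := by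
  unfold E; split_ifs <;> simp

lemma E_nonneg (n : ℕ) (k : ℕ) : E (n : ℤ) k = (n.choose k : ℤ) := by
  unfold E; rw [if_pos (by positivity)]; simp

lemma E_pascal (n : ℤ) (k : ℕ) : E n (k + 1) = E (n - 1) (k + 1) + E (n - 1) k := by
  unfold E
  rcases lt_trichotomy n 0 with h | rfl | h
  · rw [if_neg (by omega), if_neg (by omega), if_neg (by omega)]
    obtain ⟨u, hu⟩ : ∃ u : ℕ, n = -(u + 1) := ⟨(-n - 1).toNat, by omega⟩
    subst hu
    have h1 : ((k : ℤ) + 1 - -((u:ℤ) + 1) - 1).toNat = k + u + 1 := by push_cast; omega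
    have h2 : ((k : ℤ) + 1 - (-((u:ℤ) + 1) - 1) - 1).toNat = k + u + 2 := by push_cast; omega
    have h3 : ((k : ℤ) - (-((u:ℤ) + 1) - 1) - 1).toNat = k + u + 1 := by push_cast; omega
    push_cast
    rw [h1, h2, h3]
    rw [show k + u + 2 = (k + u + 1) + 1 by ring, Nat.choose_succ_succ (k + u + 1) k]
    push_cast
    ring
  · rw [if_pos le_rfl, if_neg (by omega), if_neg (by omega)]
    have h1 : ((k : ℤ) + 1 - -1 - 1).toNat = k + 1 := by push_cast; omega
    have h2 : ((k : ℤ) - -1 - 1).toNat = k := by push_cast; omega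
    push_cast
    rw [h1, h2]
    simp [Nat.choose_self, pow_succ]
  · rw [if_pos (by omega), if_pos (by omega), if_pos (by omega)]
    have h1 : n.toNat = (n - 1).toNat + 1 := by omega
    rw [h1, Nat.choose_succ_succ]
    push_cast; ring

lemma Eaux (N M : ℕ) : E ((M : ℤ) - N) (M + 1) = (-1) ^ (M + 1) * (N.choose (M + 1) : ℤ) := by
  unfold E
  split_ifs with h
  · have hNM : N ≤ M := by omega
    have h1 : ((M : ℤ) - N).toNat = M - N := by omega
    rw [h1, Nat.choose_eq_zero_of_lt (by omega), Nat.choose_eq_zero_of_lt (by omega)]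
    simp
  · have h1 : (((M : ℤ) + 1) - ((M : ℤ) - N) - 1).toNat = N := by omega
    push_cast
    rw [h1]

lemma alt (N M : ℕ) : ∑ a ∈ Finset.range (M + 1), (-1 : ℤ) ^ a * N.choose a
    = E ((M : ℤ) - N) M := by
  induction M with
  | zero => simp [E_zero]
  | succ M ih =>
    rw [Finset.sum_range_succ, ih]
    have hp := E_pascal (((M : ℤ) + 1) - N) M
    rw [show ((M : ℤ) + 1) - N - 1 = (M : ℤ) - N by ring] at hp
    rw [show ((M + 1 : ℕ) : ℤ) - N = ((M : ℤ) + 1) - N by push_cast; ring, hp, Eaux]; ring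

lemma L1 : ∀ (M t N : ℕ), t ≤ M →
    ∑ a ∈ Finset.range (t + 1), (-1 : ℤ) ^ a * N.choose a * ((M - a).choose (t - a))
      = E ((M : ℤ) - N) t := by
  intro M
  induction M with
  | zero =>
    intro t N ht
    interval_cases t
    simp [E_zero]
  | succ M ih =>
    intro t N ht
    rcases Nat.eq_or_lt_of_le ht with rfl | h
    · -- t = M + 1 : all (M+1-a).choose (M+1-a) = 1
      have : ∀ a ∈ Finset.range (M + 1 + 1),
          (-1 : ℤ) ^ a * N.choose a * ((M + 1 - a).choose (M + 1 - a))
            = (-1 : ℤ) ^ a * N.choose a := by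
        intro a _; rw [Nat.choose_self]; ring
      rw [Finset.sum_congr rfl this, alt]
    · have ht' : t ≤ M := by omega
      rcases Nat.eq_zero_or_pos t with rfl | ht0
      · simp [E_zero]
      · obtain ⟨s, rfl⟩ : ∃ s, t = s + 1 := ⟨t - 1, by omega⟩
        have hs : s ≤ M := by omega
        have split : ∀ a ∈ Finset.range (s + 1),
            (-1 : ℤ) ^ a * N.choose a * ((M + 1 - a).choose (s + 1 - a))
              = (-1 : ℤ) ^ a * N.choose a * ((M - a).choose (s + 1 - a))
                + (-1 : ℤ) ^ a * N.choose a * ((M - a).choose (s - a)) := by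
          intro a ha
          rw [Finset.mem_range] at ha
          have h1 : M + 1 - a = (M - a) + 1 := by omega
          have h2 : s + 1 - a = (s - a) + 1 := by omega
          rw [h1, h2, Nat.choose_succ_succ]
          push_cast; ring
        rw [Finset.sum_range_succ, Finset.sum_congr rfl split, Finset.sum_add_distrib]
        rw [ih s N hs]
        have e1 : ∑ a ∈ Finset.range (s + 1),
            (-1 : ℤ) ^ a * N.choose a * ((M - a).choose (s + 1 - a))
            + (-1 : ℤ) ^ (s + 1) * N.choose (s + 1) * ((M + 1 - (s + 1)).choose (s + 1 - (s + 1)))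
            = ∑ a ∈ Finset.range (s + 1 + 1),
              (-1 : ℤ) ^ a * N.choose a * ((M - a).choose (s + 1 - a)) := by
          rw [Finset.sum_range_succ _ (s + 1)]
          simp only [Nat.sub_self, Nat.choose_zero_right, Nat.cast_one, mul_one]
        have hp := E_pascal (((M : ℤ) + 1) - N) s
        rw [show ((M : ℤ) + 1) - N - 1 = (M : ℤ) - N by ring] at hp
        rw [show ((M + 1 : ℕ) : ℤ) - N = ((M : ℤ) + 1) - N by push_cast; ring, hp]
        rw [add_right_comm, e1, ih (s + 1) N ht']


lemma C_nat (n j : ℕ) : C (n : ℤ) (j : ℤ) = (n.choose j : ℤ) := by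
  unfold C
  rw [if_pos (by positivity), if_pos (by positivity)]
  simp

lemma inner (m M : ℕ) (hM : 2 * m + 1 ≤ M) :
    ∑ b ∈ Finset.range (m + 1), (-1 : ℤ) ^ b * m.choose b * ((M - b).choose (2 * m + 1 - b))
      = ((M - m).choose (2 * m + 1) : ℤ) := by
  have h1 := L1 M (2 * m + 1) m hM
  rw [← Finset.sum_subset (Finset.range_subset_range.2 (show m + 1 ≤ 2 * m + 1 + 1 by omega))
    (fun b _ hb => by
      rw [Finset.mem_range, not_lt] at hb
      rw [Nat.choose_eq_zero_of_lt (by omega)]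
      ring)] at h1
  rw [h1]
  rw [show (M : ℤ) - m = ((M - m : ℕ) : ℤ) by omega, E_nonneg]

lemma final_z (k m : ℕ) (hk : m + 2 ≤ k) :
    ∑ a ∈ Finset.range (k - 1),
        (-1 : ℤ) ^ a * (2 * k).choose a * ((k + m - 1 - a).choose (2 * m + 1))
      = (-1 : ℤ) ^ (k - m) * ((2 * k - 2 * m - 2).choose (k - m) : ℤ) := by
  rw [← Finset.sum_subset (Finset.range_subset_range.2 (show k - m - 1 ≤ k - 1 by omega))
    (fun a _ ha => by
      rw [Finset.mem_range, not_lt] at ha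
      rw [Nat.choose_eq_zero_of_lt (show k + m - 1 - a < 2 * m + 1 by omega)]
      ring)]
  have hconv : ∀ a ∈ Finset.range (k - m - 1),
      (-1 : ℤ) ^ a * (2 * k).choose a * ((k + m - 1 - a).choose (2 * m + 1))
        = (-1 : ℤ) ^ a * (2 * k).choose a * ((k + m - 1 - a).choose (k - m - 2 - a)) := by
    intro a ha
    rw [Finset.mem_range] at ha
    have h2 : k + m - 1 - a - (2 * m + 1) = k - m - 2 - a := by omega
    rw [← Nat.choose_symm (show 2 * m + 1 ≤ k + m - 1 - a by omega), h2]
  rw [Finset.sum_congr rfl hconv, show k - m - 1 = (k - m - 2) + 1 by omega,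
    L1 (k + m - 1) (k - m - 2) (2 * k) (by omega)]
  unfold E
  rw [if_neg (by omega)]
  have h3 : (((k - m - 2 : ℕ) : ℤ) - ((k + m - 1 : ℕ) - (2 * k : ℕ) : ℤ) - 1).toNat
      = 2 * k - 2 * m - 2 := by omega
  rw [h3]
  have e : k - m - 2 + 2 = k - m := by omega
  have hsign : (-1 : ℤ) ^ (k - m - 2) = (-1) ^ (k - m) := by
    conv_rhs => rw [← e]
    rw [pow_add]
    norm_num
  have hch : (2 * k - 2 * m - 2).choose (k - m - 2) = (2 * k - 2 * m - 2).choose (k - m) := by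
    rw [← Nat.choose_symm (show k - m ≤ 2 * k - 2 * m - 2 by omega)]
    congr 1
    omega
  rw [hsign, hch]


/-- For `k ≥ 0`, `l ≤ −2`:
`∑_{a=0}^{k−2} ∑_{b=0}^{−l} (−1)^{a+b} C(2k,a) C(−l,b) C(k−a−2l−b−1, −b−2l+1)
  = (−1)^{l+k} C(2k+2l−2, k+l) − δ_{k+l,0}`. -/


theorem stmt10 (k : ℕ) (l : ℤ) (hl : l ≤ -2) :
    ∑ a ∈ Finset.range (k - 1), ∑ b ∈ Finset.range (-l + 1).toNat,
        (-1 : ℚ) ^ (a + b) *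
          (C (2 * k) a * C (-l) b *
            C ((k : ℤ) - a - 2 * l - b - 1) (-(b : ℤ) - 2 * l + 1) : ℤ) =
      (-1 : ℚ) ^ (l + (k : ℤ)) * (C (2 * k + 2 * l - 2) ((k : ℤ) + l) : ℤ) -
        (if (k : ℤ) + l = 0 then 1 else 0) := by
  obtain ⟨m, rfl⟩ : ∃ m : ℕ, l = -(m : ℤ) := ⟨(-l).toNat, by omega⟩
  have hm2 : 2 ≤ m := by omega
  rw [show (-(-(m : ℤ)) + 1).toNat = m + 1 by omega]
  have step1 : ∀ a ∈ Finset.range (k - 1),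
      ∑ b ∈ Finset.range (m + 1), (-1 : ℚ) ^ (a + b) *
        ((C (2 * (k : ℤ)) (a : ℤ) * C (-(-(m : ℤ))) (b : ℤ) *
          C ((k : ℤ) - a - 2 * (-(m : ℤ)) - b - 1) (-(b : ℤ) - 2 * (-(m : ℤ)) + 1) : ℤ) : ℚ)
      = (((-1 : ℤ) ^ a * (2 * k).choose a * ((k + m - 1 - a).choose (2 * m + 1)) : ℤ) : ℚ) := by
    intro a ha
    rw [Finset.mem_range] at ha
    have hak : a + 2 ≤ k := by omega
    have hb : ∀ b ∈ Finset.range (m + 1),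
        (-1 : ℚ) ^ (a + b) *
        ((C (2 * (k : ℤ)) (a : ℤ) * C (-(-(m : ℤ))) (b : ℤ) *
          C ((k : ℤ) - a - 2 * (-(m : ℤ)) - b - 1) (-(b : ℤ) - 2 * (-(m : ℤ)) + 1) : ℤ) : ℚ)
        = (((-1 : ℤ) ^ (a + b) * ((2 * k).choose a * m.choose b *
            ((k + 2 * m - 1 - a - b).choose (2 * m + 1 - b))) : ℤ) : ℚ) := by
      intro b hbm
      rw [Finset.mem_range] at hbm
      have hC1 : C (2 * (k : ℤ)) (a : ℤ) = ((2 * k).choose a : ℤ) := by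
        rw [show (2 * (k : ℤ)) = ((2 * k : ℕ) : ℤ) by push_cast; ring]
        exact C_nat _ _
      have hC2 : C (-(-(m : ℤ))) (b : ℤ) = (m.choose b : ℤ) := by
        rw [neg_neg]; exact C_nat m b
      have hC3 : C ((k : ℤ) - a - 2 * (-(m : ℤ)) - b - 1) (-(b : ℤ) - 2 * (-(m : ℤ)) + 1)
          = ((k + 2 * m - 1 - a - b).choose (2 * m + 1 - b) : ℤ) := by
        rw [show (k : ℤ) - a - 2 * (-(m : ℤ)) - b - 1 = ((k + 2 * m - 1 - a - b : ℕ) : ℤ) by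
            omega,
          show -(b : ℤ) - 2 * (-(m : ℤ)) + 1 = ((2 * m + 1 - b : ℕ) : ℤ) by omega]
        exact C_nat _ _
      rw [hC1, hC2, hC3]
      push_cast
      ring
    rw [Finset.sum_congr rfl hb]
    rw [← Int.cast_sum]
    congr 1
    calc ∑ b ∈ Finset.range (m + 1), (-1 : ℤ) ^ (a + b) * ((2 * k).choose a * m.choose b *
            ((k + 2 * m - 1 - a - b).choose (2 * m + 1 - b)))
        = (-1 : ℤ) ^ a * (2 * k).choose a * ∑ b ∈ Finset.range (m + 1),
            (-1 : ℤ) ^ b * m.choose b * ((k + 2 * m - 1 - a - b).choose (2 * m + 1 - b)) := by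
          rw [Finset.mul_sum]
          refine Finset.sum_congr rfl fun b _ => ?_
          rw [pow_add]
          ring
      _ = (-1 : ℤ) ^ a * (2 * k).choose a * ((k + 2 * m - 1 - a - m).choose (2 * m + 1)) := by
          rw [inner m (k + 2 * m - 1 - a) (by omega)]
      _ = (-1 : ℤ) ^ a * (2 * k).choose a * ((k + m - 1 - a).choose (2 * m + 1)) := by
          rw [show k + 2 * m - 1 - a - m = k + m - 1 - a by omega]
  rw [Finset.sum_congr rfl step1, ← Int.cast_sum]
  by_cases hkm : m + 2 ≤ k
  · rw [final_z k m hkm]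
    have h1 : (-1 : ℚ) ^ (-(m : ℤ) + (k : ℤ)) = (-1 : ℚ) ^ (k - m) := by
      rw [show -(m : ℤ) + (k : ℤ) = ((k - m : ℕ) : ℤ) by omega, zpow_natCast]
    have h2 : C (2 * (k : ℤ) + 2 * (-(m : ℤ)) - 2) ((k : ℤ) + -(m : ℤ))
        = ((2 * k - 2 * m - 2).choose (k - m) : ℤ) := by
      rw [show 2 * (k : ℤ) + 2 * (-(m : ℤ)) - 2 = ((2 * k - 2 * m - 2 : ℕ) : ℤ) by omega,
        show (k : ℤ) + -(m : ℤ) = ((k - m : ℕ) : ℤ) by omega]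
      exact C_nat _ _
    rw [h1, h2, if_neg (by omega)]
    push_cast
    ring
  · rw [Finset.sum_eq_zero (fun a ha => by
      rw [Finset.mem_range] at ha
      rw [Nat.choose_eq_zero_of_lt (show k + m - 1 - a < 2 * m + 1 by omega)]
      ring)]
    rcases show k < m ∨ k = m ∨ k = m + 1 by omega with h | rfl | rfl
    · have hC : C (2 * (k : ℤ) + 2 * (-(m : ℤ)) - 2) ((k : ℤ) + -(m : ℤ)) = 0 := by
        unfold C
        rw [if_neg (by omega), if_neg (by omega), if_neg (by omega)]
      rw [hC, if_neg (by omega)]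
      norm_num
    · have hC : C (2 * (k : ℤ) + 2 * (-(k : ℤ)) - 2) ((k : ℤ) + -(k : ℤ)) = 1 := by
        rw [show 2 * (k : ℤ) + 2 * (-(k : ℤ)) - 2 = -2 by ring,
          show (k : ℤ) + -(k : ℤ) = 0 by ring]
        decide
      rw [hC, show (k : ℤ) + -(k : ℤ) = 0 by ring, if_pos rfl,
        show -(k : ℤ) + (k : ℤ) = 0 by ring, zpow_zero]
      norm_num
    · have hC : C (2 * ((m + 1 : ℕ) : ℤ) + 2 * (-(m : ℤ)) - 2) (((m + 1 : ℕ) : ℤ) + -(m : ℤ))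
          = 0 := by
        rw [show 2 * ((m + 1 : ℕ) : ℤ) + 2 * (-(m : ℤ)) - 2 = ((0 : ℕ) : ℤ) by push_cast; ring,
          show ((m + 1 : ℕ) : ℤ) + -(m : ℤ) = ((1 : ℕ) : ℤ) by push_cast; ring,
          C_nat]
        simp
      rw [hC, if_neg (by omega)]
      norm_num
end

section
/- With R, D, d_n, e_n as above, in Der(R) one has [d_m, e_n] = (n−m−1) e_{m+n+1} + (4n−4m−2) e_{m+n}. -/
set_option synthInstance.maxHeartbeats 1000000
set_option maxHeartbeats 1000000

open MvPolynomial in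
/-- `R = ℂ[t, t⁻¹, u] / (u² − t² − 4t)`, modelled as `ℂ[x₀,x₁,x₂]` modulo the
ideal generated by `x₀x₁ − 1` (making `x₀ = t` invertible with inverse `x₁`)
and `x₂² − x₀² − 4x₀`. -/
noncomputable abbrev R3 : Type :=
  MvPolynomial (Fin 3) ℂ ⧸
    Ideal.span {(X 0 * X 1 - 1 : MvPolynomial (Fin 3) ℂ), X 2 ^ 2 - X 0 ^ 2 - 4 * X 0}

open MvPolynomial in
/-- the class of `t` in `R`. -/
noncomputable def tR : R3 := Ideal.Quotient.mk _ (X 0)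

open MvPolynomial in
/-- the class of `t⁻¹` in `R`. -/
noncomputable def tinv : R3 := Ideal.Quotient.mk _ (X 1)

open MvPolynomial in
/-- the class of `u` in `R`. -/
noncomputable def uR : R3 := Ideal.Quotient.mk _ (X 2)

/-- integer powers `tⁿ` of the invertible element `t` of `R`. -/
noncomputable def tpow (n : ℤ) : R3 := if 0 ≤ n then tR ^ n.toNat else tinv ^ (-n).toNat

/-- `eR n = tⁿ D ∈ Der(R)` for a derivation `D`. -/
noncomputable def eR (D : Derivation ℂ R3 R3) (n : ℤ) : Derivation ℂ R3 R3 :=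
  tpow n • D

/-- `dR n = tⁿ u D ∈ Der(R)` for a derivation `D`. -/
noncomputable def dR (D : Derivation ℂ R3 R3) (n : ℤ) : Derivation ℂ R3 R3 :=
  (tpow n * uR) • D

/-! For derivations of the form `f • D` one has `⁅f • D, g • D⁆ = (f D g - g D f) • D`.
With `D (tⁿ) = n tⁿ⁻¹ u` and `D u = t + 2`, the coefficient for `f = tᵐ u`, `g = tⁿ` is
`(n - m) tᵐ⁺ⁿ⁻¹ u² - tᵐ⁺ⁿ (t + 2)`, and the relation `u² = t² + 4t` turns it into
`(n - m - 1) tᵐ⁺ⁿ⁺¹ + (4n - 4m - 2) tᵐ⁺ⁿ`. -/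

namespace Derivation

variable {R A : Type*} [CommRing R] [CommRing A] [Algebra R A] (D : Derivation R A A)

theorem lie_smul_smul (f g : A) : ⁅f • D, g • D⁆ = (f * D g - g * D f) • D := by
  ext a
  simp only [commutator_apply, smul_apply, smul_eq_mul, leibniz]
  ring

theorem leibniz_unit_zpow (v : Aˣ) (n : ℤ) : D ↑(v ^ n) = n • (↑(v ^ (n - 1)) * D v) := by
  induction n using Int.induction_on with
  | zero => simp
  | succ k ih =>
    rw [zpow_add_one, Units.val_mul, leibniz, ih, add_sub_cancel_right, zpow_sub_one,
      Units.val_mul]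
    simp only [smul_eq_mul, zsmul_eq_mul]
    push_cast
    linear_combination (k * ↑(v ^ (k : ℤ)) * D v) * v.mul_inv
  | pred k ih =>
    have hinv : D ↑v⁻¹ = -((↑v⁻¹ : A) ^ 2 * D v) := by
      rw [D.leibniz_of_mul_eq_one v.inv_mul, neg_smul, smul_eq_mul]
    have hshift : v ^ (-(k : ℤ) - 1 - 1) = v ^ (-(k : ℤ) - 1) * v⁻¹ := zpow_sub_one v _
    rw [zpow_sub_one, Units.val_mul, leibniz, ih, hinv, hshift, zpow_sub_one, Units.val_mul]
    simp only [smul_eq_mul, zsmul_eq_mul]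
    push_cast
    ring

theorem lie_zpow_mul_smul_zpow_smul {t : Aˣ} {u : A} (hu : u ^ 2 = t ^ 2 + 4 * t)
    (hDt : D t = u) (hDu : D u = t + 2) (m n : ℤ) :
    ⁅(↑(t ^ m) * u) • D, (↑(t ^ n) : A) • D⁆ =
      (n - m - 1) • ((↑(t ^ (m + n + 1)) : A) • D) +
        (4 * n - 4 * m - 2) • ((↑(t ^ (m + n)) : A) • D) := by
  rw [D.lie_smul_smul]
  simp only [← Int.cast_smul_eq_zsmul A, smul_smul, ← add_smul]
  congr 1
  simp only [D.leibniz, D.leibniz_unit_zpow, hDt, hDu, zpow_sub_one, zpow_add, zpow_one,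
    Units.val_mul, smul_eq_mul]
  push_cast
  linear_combination (n - m : A) * ↑(t ^ m) * ↑(t ^ n) * ↑t⁻¹ * hu +
    (n - m : A) * ↑(t ^ m) * ↑(t ^ n) * (t + 4) * t.mul_inv

end Derivation

theorem tR_mul_tinv : tR * tinv = 1 := by
  rw [tR, tinv, ← map_mul, ← map_one (Ideal.Quotient.mk _), Ideal.Quotient.eq]
  exact Ideal.subset_span (Set.mem_insert _ _)

theorem uR_sq : uR ^ 2 = tR ^ 2 + 4 * tR := by
  rw [uR, tR, ← map_pow, ← map_pow, ← map_ofNat (Ideal.Quotient.mk _), ← map_mul, ← map_add,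
    Ideal.Quotient.eq, ← sub_sub]
  exact Ideal.subset_span (Set.mem_insert_of_mem _ rfl)

noncomputable def tUnit : R3ˣ := ⟨tR, tinv, tR_mul_tinv, (mul_comm _ _).trans tR_mul_tinv⟩

theorem tpow_eq_val_zpow (n : ℤ) : tpow n = ↑(tUnit ^ n) := by
  rcases n with k | k <;> simp [tpow, tUnit]

/-- For any derivation `D` of `R` with `D t = u` and `D u = t + 2` (i.e. the
derivation `(t+2)∂ᵤ + u∂ₜ`), one has
`[dₘ, eₙ] = (n − m − 1) e_{m+n+1} + (4n − 4m − 2) e_{m+n}` in `Der(R)`. -/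
theorem stmt16 (D : Derivation ℂ R3 R3) (hDt : D tR = uR) (hDu : D uR = tR + 2)
    (m n : ℤ) :
    ⁅dR D m, eR D n⁆ = (n - m - 1) • eR D (m + n + 1) + (4 * n - 4 * m - 2) • eR D (m + n) := by
  simp only [dR, eR, tpow_eq_val_zpow]
  exact D.lie_zpow_mul_smul_zpow_smul uR_sq hDt hDu m n
end
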